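/- For positive reals $a, b, c$ not all equal, the cubic polynomial $D(x) = x^3 - 2(a+b+c)x^2 + (a+b+c)^2 x - 4abc$ has three distinct real roots. -/

import Mathlib

/-!
Write `s = a + b + c` and `p = abc`, so that `D(x) = x (x - s)² - 4p`. Then `D(0) = D(s) = -4p < 0`,
while `D(s/3) = 4(s³ - 27p)/27` and `D(2s) = 2s³ - 4p` are positive by strict AM-GM. The
intermediate value theorem gives a root in each of `(0, s/3)`, `(s/3, s)` and `(s, 2s)`, and a
monic cubic has no roots besides three distinct ones.
-/

open Set

theorem eq_zero_of_quadratic_eq_zero_of_three_roots {K : Type*} [Field K] {A B C p q r : K}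
    (hpq : p ≠ q) (hpr : p ≠ r) (hqr : q ≠ r)
    (hp : A * p ^ 2 + B * p + C = 0) (hq : A * q ^ 2 + B * q + C = 0)
    (hr : A * r ^ 2 + B * r + C = 0) :
    A = 0 ∧ B = 0 ∧ C = 0 := by
  have hpq' : A * (p + q) + B = 0 :=
    (mul_eq_zero.mp (by linear_combination hp - hq : (A * (p + q) + B) * (p - q) = 0)).resolve_right
      (sub_ne_zero.mpr hpq)
  have hpr' : A * (p + r) + B = 0 :=
    (mul_eq_zero.mp (by linear_combination hp - hr : (A * (p + r) + B) * (p - r) = 0)).resolve_right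
      (sub_ne_zero.mpr hpr)
  have hA : A = 0 :=
    (mul_eq_zero.mp (by linear_combination hpq' - hpr' : A * (q - r) = 0)).resolve_right
      (sub_ne_zero.mpr hqr)
  have hB : B = 0 := by linear_combination hpq' - (p + q) * hA
  exact ⟨hA, hB, by linear_combination hp - p ^ 2 * hA - p * hB⟩

theorem monic_cubic_eq_zero_iff_of_three_roots {K : Type*} [Field K] {B C D r₁ r₂ r₃ : K}
    (h₁₂ : r₁ ≠ r₂) (h₁₃ : r₁ ≠ r₃) (h₂₃ : r₂ ≠ r₃)
    (hr₁ : r₁ ^ 3 + B * r₁ ^ 2 + C * r₁ + D = 0) (hr₂ : r₂ ^ 3 + B * r₂ ^ 2 + C * r₂ + D = 0)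
    (hr₃ : r₃ ^ 3 + B * r₃ ^ 2 + C * r₃ + D = 0) (x : K) :
    x ^ 3 + B * x ^ 2 + C * x + D = 0 ↔ x = r₁ ∨ x = r₂ ∨ x = r₃ := by
  -- The cubic minus `(x - r₁)(x - r₂)(x - r₃)` is a quadratic vanishing at `r₁, r₂, r₃`.
  have remainder (r : K) (hr : r ^ 3 + B * r ^ 2 + C * r + D = 0)
      (hvanish : (r - r₁) * (r - r₂) * (r - r₃) = 0) :
      (B + (r₁ + r₂ + r₃)) * r ^ 2 + (C - (r₁ * r₂ + r₁ * r₃ + r₂ * r₃)) * r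
        + (D + r₁ * r₂ * r₃) = 0 := by
    linear_combination hr - hvanish
  obtain ⟨hB, hC, hD⟩ := eq_zero_of_quadratic_eq_zero_of_three_roots h₁₂ h₁₃ h₂₃
    (remainder r₁ hr₁ (by ring)) (remainder r₂ hr₂ (by ring)) (remainder r₃ hr₃ (by ring))
  have factor : x ^ 3 + B * x ^ 2 + C * x + D = (x - r₁) * (x - r₂) * (x - r₃) := by
    linear_combination x ^ 2 * hB + x * hC + hD
  simp only [factor, mul_eq_zero, sub_eq_zero, or_assoc]

theorem exists_three_zeros_of_sign_changes {f : ℝ → ℝ} {u₀ u₁ u₂ u₃ : ℝ}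
    (hf : ContinuousOn f (Icc u₀ u₃)) (h₀₁ : u₀ ≤ u₁) (h₁₂ : u₁ ≤ u₂) (h₂₃ : u₂ ≤ u₃)
    (hu₀ : f u₀ < 0) (hu₁ : 0 < f u₁) (hu₂ : f u₂ < 0) (hu₃ : 0 < f u₃) :
    ∃ r₁ r₂ r₃, r₁ < r₂ ∧ r₂ < r₃ ∧ f r₁ = 0 ∧ f r₂ = 0 ∧ f r₃ = 0 := by
  obtain ⟨r₁, ⟨-, hr₁⟩, hfr₁⟩ := intermediate_value_Ioo h₀₁
    (hf.mono (Icc_subset_Icc le_rfl (h₁₂.trans h₂₃))) ⟨hu₀, hu₁⟩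
  obtain ⟨r₂, ⟨hr₂, hr₂'⟩, hfr₂⟩ := intermediate_value_Ioo' h₁₂
    (hf.mono (Icc_subset_Icc h₀₁ h₂₃)) ⟨hu₂, hu₁⟩
  obtain ⟨r₃, ⟨hr₃, -⟩, hfr₃⟩ := intermediate_value_Ioo h₂₃
    (hf.mono (Icc_subset_Icc (h₀₁.trans h₁₂) le_rfl)) ⟨hu₂, hu₃⟩
  exact ⟨r₁, r₂, r₃, hr₁.trans hr₂, hr₂'.trans hr₃, hfr₁, hfr₂, hfr₃⟩

theorem twenty_seven_mul_lt_add_pow_three {a b c : ℝ} (ha : 0 ≤ a) (hb : 0 ≤ b) (hc : 0 ≤ c)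
    (hne : ¬(a = b ∧ b = c)) :
    27 * (a * b * c) < (a + b + c) ^ 3 := by
  have hs : 0 < a + b + c := by
    by_contra! hs
    exact hne ⟨by linarith, by linarith⟩
  have hsq : 0 < (a - b) ^ 2 + (b - c) ^ 2 + (a - c) ^ 2 := by
    rcases not_and_or.mp hne with h | h
    · have := sq_pos_of_ne_zero (sub_ne_zero.mpr h); positivity
    · have := sq_pos_of_ne_zero (sub_ne_zero.mpr h); positivity
  have sos : (a + b + c) ^ 3 - 27 * (a * b * c) =
      (a + b + c) / 2 * ((a - b) ^ 2 + (b - c) ^ 2 + (a - c) ^ 2)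
        + 3 * (a * (b - c) ^ 2 + b * (a - c) ^ 2 + c * (a - b) ^ 2) := by
    ring
  rw [← sub_pos, sos]
  positivity

theorem cubic_three_distinct_roots (a b c : ℝ) (ha : 0 < a) (hb : 0 < b) (hc : 0 < c)
    (hne : ¬(a = b ∧ b = c)) :
    ∃ r₁ r₂ r₃ : ℝ, r₁ ≠ r₂ ∧ r₁ ≠ r₃ ∧ r₂ ≠ r₃ ∧
      ∀ x : ℝ, x ^ 3 - 2 * (a + b + c) * x ^ 2 + (a + b + c) ^ 2 * x - 4 * (a * b * c) = 0 ↔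
        (x = r₁ ∨ x = r₂ ∨ x = r₃) := by
  set s := a + b + c
  have hp : 0 < a * b * c := by positivity
  have hs : 0 < s := by positivity
  have amgm := twenty_seven_mul_lt_add_pow_three ha.le hb.le hc.le hne
  obtain ⟨r₁, r₂, r₃, h₁₂, h₂₃, hr₁, hr₂, hr₃⟩ :=
    exists_three_zeros_of_sign_changes (f := fun x ↦ x * (x - s) ^ 2 - 4 * (a * b * c))
      (u₀ := 0) (u₁ := s / 3) (u₂ := s) (u₃ := 2 * s) (by fun_prop)
      (by positivity) (by linarith) (by linarith)
      (by linarith) (by nlinarith) (by linarith) (by nlinarith)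
  have hroot (r : ℝ) (hr : r * (r - s) ^ 2 - 4 * (a * b * c) = 0) :
      r ^ 3 + (-2 * s) * r ^ 2 + s ^ 2 * r + -4 * (a * b * c) = 0 := by
    linear_combination hr
  refine ⟨r₁, r₂, r₃, h₁₂.ne, (h₁₂.trans h₂₃).ne, h₂₃.ne, fun x ↦ ?_⟩
  rw [← monic_cubic_eq_zero_iff_of_three_roots h₁₂.ne (h₁₂.trans h₂₃).ne h₂₃.ne
    (hroot r₁ hr₁) (hroot r₂ hr₂) (hroot r₃ hr₃)]
  constructor <;> intro h <;> linear_combination h
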